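/- arXiv:1105.1791 — 2 statements merged into one kernel-verified Lean document; each statement's English description precedes it below -/
import Mathlib

section
/- If Σ is a compact immersed surface in ℝ⁴ whose principal angles with respect to a fixed plane Π are constant (independent of the point), then these constant principal angles are 0 and π/2. -/
noncomputable section
open Real
open scoped Manifold RealInnerProductSpace

abbrev E4 := EuclideanSpace ℝ (Fin 4)

/-- `θ₁ ≤ θ₂` are the principal angles between the planes `V` and `W` of `ℝ⁴`:
`cos²θ₁`, `cos²θ₂` are the eigenvalues of the quadratic form `v ↦ ‖p_W v‖²` on `V`. -/
def IsPrincipalAngles (V W : Submodule ℝ E4) (θ₁ θ₂ : ℝ) : Prop :=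
  0 ≤ θ₁ ∧ θ₁ ≤ θ₂ ∧ θ₂ ≤ π / 2 ∧
  ∃ v₁ v₂ : E4, v₁ ∈ V ∧ v₂ ∈ V ∧ ‖v₁‖ = 1 ∧ ‖v₂‖ = 1 ∧ ⟪v₁, v₂⟫ = 0 ∧
    ∀ v ∈ V, ‖(W.orthogonalProjection v : E4)‖ ^ 2 =
      Real.cos θ₁ ^ 2 * ⟪v, v₁⟫ ^ 2 + Real.cos θ₂ ^ 2 * ⟪v, v₂⟫ ^ 2

/-! For every direction `w`, the height function `⟪w, φ⟫` attains its maximum on the compact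
surface, and there `w ⟂ T_pΣ`. If `w ≠ 0` lies in a plane `W`, the orthogonal projection
`T_pΣ → W` then misses `w`, so it has a kernel: `T_pΣ` contains a nonzero vector orthogonal
to `W`. For `W = Π⊥` this is a tangent vector lying in `Π`, which forces `cos θ₁ = 1`; for
`W = Π` it is a tangent vector orthogonal to `Π`, which, once `θ₁ = 0`, forces `cos θ₂ = 0`. -/

open Module

section InnerProductSpace

variable {F : Type*} [NormedAddCommGroup F] [InnerProductSpace ℝ F]

theorem Orthonormal.sum_sq_inner_eq_norm_sq {ι : Type*} [Fintype ι] {e : ι → F}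
    (he : Orthonormal ℝ e) {T : Submodule ℝ F} [FiniteDimensional ℝ T] (heT : ∀ i, e i ∈ T)
    (hcard : Fintype.card ι = finrank ℝ T) {v : F} (hv : v ∈ T) :
    ∑ i, ⟪e i, v⟫ ^ 2 = ‖v‖ ^ 2 := by
  have he' := he.codRestrict T heT
  have hspan := (he'.linearIndependent.span_eq_top_of_card_eq_finrank' hcard).ge
  simpa using (OrthonormalBasis.mk he' hspan).sum_sq_inner_right ⟨v, hv⟩

theorem exists_ne_zero_mem_inf_orthogonal {T W : Submodule ℝ F} [FiniteDimensional ℝ T]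
    [FiniteDimensional ℝ W] (hle : finrank ℝ W ≤ finrank ℝ T) {w : F} (hwW : w ∈ W)
    (hwT : w ∈ Tᗮ) (hw : w ≠ 0) : ∃ v ∈ T, v ∈ Wᗮ ∧ v ≠ 0 := by
  by_contra! hT
  set P : T →ₗ[ℝ] W := W.orthogonalProjectionOnto.toLinearMap ∘ₗ T.subtype
  have hinj : Function.Injective P := by
    refine (injective_iff_map_eq_zero P).2 fun t ht => Subtype.ext (hT t t.2 ?_)
    rw [← Submodule.starProjection_apply_eq_zero_iff]
    exact congrArg Subtype.val ht
  have hsurj : Function.Surjective P :=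
    (LinearMap.injective_iff_surjective_of_finrank_eq_finrank (f := P)
      (hle.antisymm' (LinearMap.finrank_le_finrank_of_injective hinj))).1 hinj
  obtain ⟨t, ht⟩ := hsurj ⟨w, hwW⟩
  refine hw (inner_self_eq_zero (𝕜 := ℝ).1 ?_)
  calc ⟪w, w⟫ = ⟪W.starProjection t, w⟫ := congrArg (⟪·, w⟫) (congrArg Subtype.val ht).symm
    _ = ⟪(t : F), W.starProjection w⟫ := W.inner_starProjection_left_eq_right _ _
    _ = 0 := by
      rw [Submodule.starProjection_eq_self_iff.2 hwW, real_inner_comm]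
      exact (Submodule.mem_orthogonal' _ _).1 hwT t t.2

end InnerProductSpace

section Manifold

variable {E H M : Type*} [NormedAddCommGroup E] [NormedSpace ℝ E] [TopologicalSpace H]
  {I : ModelWithCorners ℝ E H} [I.Boundaryless] [TopologicalSpace M] [ChartedSpace H M]

theorem IsLocalMax.mfderiv_eq_zero {f : M → ℝ} {p : M} (h : IsLocalMax f p) :
    mfderiv I 𝓘(ℝ, ℝ) f p = 0 := by
  by_cases hf : MDifferentiableAt I 𝓘(ℝ, ℝ) f p
  · rw [hf.mfderiv, I.range_eq_univ, fderivWithin_univ]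
    refine IsLocalMax.fderiv_eq_zero ?_
    have hp : (extChartAt I p).symm (extChartAt I p p) = p := extChartAt_to_inv p
    have hlim := (continuousAt_extChartAt_symm (I := I) p).tendsto
    rw [hp] at hlim
    refine (hlim.eventually h).mono fun y hy => ?_
    simpa [writtenInExtChartAt, hp, chartAt_self_eq] using hy
  · exact mfderiv_zero_of_not_mdifferentiableAt hf

variable {F : Type*} [NormedAddCommGroup F] [InnerProductSpace ℝ F]

theorem exists_mem_orthogonal_range_mfderiv [CompactSpace M] [Nonempty M] {φ : M → F}
    (hφ : MDifferentiable I 𝓘(ℝ, F) φ) (w : F) :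
    ∃ p, w ∈ (LinearMap.range (mfderiv I 𝓘(ℝ, F) φ p).toLinearMap : Submodule ℝ F)ᗮ := by
  obtain ⟨p, -, hp⟩ := isCompact_univ.exists_isMaxOn Set.univ_nonempty
    ((innerSL ℝ w).continuous.comp hφ.continuous).continuousOn
  have hcrit := (hp.isLocalMax Filter.univ_mem).mfderiv_eq_zero (I := I)
  rw [mfderiv_comp p (innerSL ℝ w).mdifferentiableAt (hφ p), mfderiv_eq_fderiv,
    ContinuousLinearMap.fderiv] at hcrit
  refine ⟨p, (Submodule.mem_orthogonal' _ _).2 ?_⟩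
  rintro - ⟨x, rfl⟩
  exact DFunLike.congr_fun hcrit x

theorem exists_ne_zero_mem_range_mfderiv_inf_orthogonal [CompactSpace M] [Nonempty M]
    {φ : M → F} (hφ : MDifferentiable I 𝓘(ℝ, F) φ) {W : Submodule ℝ F} (hW : 0 < finrank ℝ W)
    (hdim : ∀ p, finrank ℝ W ≤
      finrank ℝ (LinearMap.range (mfderiv I 𝓘(ℝ, F) φ p).toLinearMap : Submodule ℝ F)) :
    ∃ p, ∃ v ∈ (LinearMap.range (mfderiv I 𝓘(ℝ, F) φ p).toLinearMap : Submodule ℝ F),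
      v ∈ Wᗮ ∧ v ≠ 0 := by
  have := FiniteDimensional.of_finrank_pos hW
  obtain ⟨⟨w, hwW⟩, hw⟩ := finrank_pos_iff_exists_ne_zero.1 hW
  obtain ⟨p, hp⟩ := exists_mem_orthogonal_range_mfderiv hφ w
  have := FiniteDimensional.of_finrank_pos (hW.trans_le (hdim p))
  exact ⟨p, exists_ne_zero_mem_inf_orthogonal (hdim p) hwW hp (by simpa using hw)⟩

end Manifold

namespace IsPrincipalAngles

variable {V W : Submodule ℝ E4} {θ₁ θ₂ : ℝ}

theorem exists_norm_sq_starProjection_eq (h : IsPrincipalAngles V W θ₁ θ₂)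
    (hV : finrank ℝ V = 2) {v : E4} (hv : v ∈ V) :
    ∃ a b : ℝ, a ^ 2 + b ^ 2 = ‖v‖ ^ 2 ∧
      ‖W.starProjection v‖ ^ 2 = cos θ₁ ^ 2 * a ^ 2 + cos θ₂ ^ 2 * b ^ 2 := by
  obtain ⟨-, -, -, v₁, v₂, hv₁, hv₂, hn₁, hn₂, h₁₂, hform⟩ := h
  have he : Orthonormal ℝ ![v₁, v₂] := by simp [hn₁, hn₂, h₁₂]
  refine ⟨⟪v, v₁⟫, ⟪v, v₂⟫, ?_, hform v hv⟩
  simpa [real_inner_comm] using he.sum_sq_inner_eq_norm_sq (T := V)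
    (by simp [Fin.forall_fin_two, hv₁, hv₂]) (by simp [hV]) hv

theorem eq_zero_of_mem_of_mem (h : IsPrincipalAngles V W θ₁ θ₂) (hV : finrank ℝ V = 2)
    {v : E4} (hvV : v ∈ V) (hvW : v ∈ W) (hv : v ≠ 0) : θ₁ = 0 := by
  obtain ⟨a, b, hab, hPv⟩ := h.exists_norm_sq_starProjection_eq hV hvV
  obtain ⟨hθ₁, hθ₁₂, hθ₂, -⟩ := h
  rw [Submodule.starProjection_eq_self_iff.2 hvW] at hPv
  have hc₁ : 0 ≤ cos θ₁ := cos_nonneg_of_mem_Icc ⟨by linarith [pi_pos], by linarith⟩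
  have hc₂ : 0 ≤ cos θ₂ := cos_nonneg_of_mem_Icc ⟨by linarith [pi_pos], hθ₂⟩
  have hc₂₁ : cos θ₂ ≤ cos θ₁ := cos_le_cos_of_nonneg_of_le_pi hθ₁ (by linarith [pi_pos]) hθ₁₂
  have hc₁sq : 1 ≤ cos θ₁ ^ 2 := by
    refine le_of_mul_le_mul_right ?_ (by positivity : 0 < ‖v‖ ^ 2)
    calc 1 * ‖v‖ ^ 2 = cos θ₁ ^ 2 * a ^ 2 + cos θ₂ ^ 2 * b ^ 2 := by rw [one_mul, hPv]
      _ ≤ cos θ₁ ^ 2 * a ^ 2 + cos θ₁ ^ 2 * b ^ 2 := by gcongr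
      _ = cos θ₁ ^ 2 * ‖v‖ ^ 2 := by rw [← hab]; ring
  have hc₁1 : cos θ₁ = 1 := by nlinarith [cos_le_one θ₁]
  exact (cos_eq_one_iff_of_lt_of_lt (by linarith [pi_pos]) (by linarith [pi_pos])).1 hc₁1

theorem eq_pi_div_two_of_mem_of_mem_orthogonal (h : IsPrincipalAngles V W 0 θ₂)
    (hV : finrank ℝ V = 2) {v : E4} (hvV : v ∈ V) (hvW : v ∈ Wᗮ) (hv : v ≠ 0) :
    θ₂ = π / 2 := by
  obtain ⟨a, b, hab, hPv⟩ := h.exists_norm_sq_starProjection_eq hV hvV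
  obtain ⟨-, hθ₂, hθ₂', -⟩ := h
  rw [(W.starProjection_apply_eq_zero_iff).2 hvW, cos_zero, norm_zero] at hPv
  have ha : a ^ 2 = 0 := by nlinarith [sq_nonneg a, sq_nonneg (cos θ₂ * b)]
  have hb : 0 < b ^ 2 := by linarith [pow_pos (norm_pos_iff.2 hv) 2]
  have hc₂ : cos θ₂ = 0 := (pow_eq_zero_iff two_ne_zero).1 (by nlinarith)
  exact injOn_cos ⟨hθ₂, by linarith [pi_pos]⟩ ⟨by linarith [pi_pos], by linarith [pi_pos]⟩
    (hc₂.trans cos_pi_div_two.symm)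

end IsPrincipalAngles

theorem compact_helix_surface_angles_eq_zero_pi_div_two_general
    {M : Type*} [TopologicalSpace M] [ChartedSpace (EuclideanSpace ℝ (Fin 2)) M]
    [CompactSpace M] [Nonempty M]
    (φ : M → E4) (hφ : ContMDiff (𝓡 2) 𝓘(ℝ, E4) (⊤ : ℕ∞) φ)
    (himm : ∀ p : M, Function.Injective (mfderiv (𝓡 2) 𝓘(ℝ, E4) φ p))
    (Pl : Submodule ℝ E4) (hPl : Module.finrank ℝ Pl = 2)
    (θ₁ θ₂ : ℝ)
    (hconst : ∀ p : M, IsPrincipalAngles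
      (LinearMap.range (mfderiv (𝓡 2) 𝓘(ℝ, E4) φ p).toLinearMap) Pl θ₁ θ₂) :
    θ₁ = 0 ∧ θ₂ = π / 2 := by
  have hφ' := hφ.mdifferentiable (by simp)
  have hT (p : M) : finrank ℝ (LinearMap.range (mfderiv (𝓡 2) 𝓘(ℝ, E4) φ p).toLinearMap) = 2 :=
    (LinearMap.finrank_range_of_inj (himm p)).trans finrank_euclideanSpace_fin
  have hPl' : finrank ℝ Plᗮ = 2 := by
    have := Pl.finrank_add_finrank_orthogonal
    rw [hPl, finrank_euclideanSpace_fin] at this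
    omega
  have hθ₁ : θ₁ = 0 := by
    obtain ⟨p, v, hvT, hvPl, hv⟩ := exists_ne_zero_mem_range_mfderiv_inf_orthogonal hφ'
      (W := Plᗮ) (by omega) fun p => (hPl'.trans (hT p).symm).le
    rw [Pl.orthogonal_orthogonal] at hvPl
    exact (hconst p).eq_zero_of_mem_of_mem (hT p) hvT hvPl hv
  subst hθ₁
  obtain ⟨p, v, hvT, hvPl, hv⟩ := exists_ne_zero_mem_range_mfderiv_inf_orthogonal hφ'
    (W := Pl) (by omega) fun p => (hPl.trans (hT p).symm).le
  exact ⟨rfl, (hconst p).eq_pi_div_two_of_mem_of_mem_orthogonal (hT p) hvT hvPl hv⟩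

/-- If `Σ` is a compact surface immersed in `ℝ⁴` via `φ` whose principal angles with
respect to a fixed plane `Pl` are constant, equal to `θ₁ ≤ θ₂` at every point, then
`θ₁ = 0` and `θ₂ = π/2`. -/
theorem compact_helix_surface_angles_eq_zero_pi_div_two
    {M : Type*} [TopologicalSpace M] [ChartedSpace (EuclideanSpace ℝ (Fin 2)) M]
    [IsManifold (𝓡 2) (⊤ : ℕ∞) M] [CompactSpace M] [Nonempty M]
    (φ : M → E4) (hφ : ContMDiff (𝓡 2) 𝓘(ℝ, E4) (⊤ : ℕ∞) φ)
    (himm : ∀ p : M, Function.Injective (mfderiv (𝓡 2) 𝓘(ℝ, E4) φ p))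
    (Pl : Submodule ℝ E4) (hPl : Module.finrank ℝ Pl = 2)
    (θ₁ θ₂ : ℝ)
    (hconst : ∀ p : M, IsPrincipalAngles
      (LinearMap.range (mfderiv (𝓡 2) 𝓘(ℝ, E4) φ p).toLinearMap) Pl θ₁ θ₂) :
    θ₁ = 0 ∧ θ₂ = π / 2 :=
  compact_helix_surface_angles_eq_zero_pi_div_two_general φ hφ himm Pl hPl θ₁ θ₂ hconst
end
end

section
/- Let f, g: Ω ⊂ ℝ² → ℝ be smooth and let Σ be the graph (x,y) ↦ (x,y,f(x,y),g(x,y)). Then Σ has constant principal angles θ₁, θ₂ ∈ (0, π/2) with respect to the plane ℝ²×{0} if and only if f_x² + g_x² + f_y² + g_y² = sec²θ₁ + sec²θ₂ − 2 and (f_x g_y − f_y g_x)² = tan²θ₁ tan²θ₂ hold identically. -/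
noncomputable section
open Real
open scoped RealInnerProductSpace

def px (f : ℝ × ℝ → ℝ) (p : ℝ × ℝ) : ℝ := fderiv ℝ f p (1, 0)
def py (f : ℝ × ℝ → ℝ) (p : ℝ × ℝ) : ℝ := fderiv ℝ f p (0, 1)

/-- `∂ₓ = (1, 0, f_x, g_x)`. -/
def Dx (f g : ℝ × ℝ → ℝ) (p : ℝ × ℝ) : E4 :=
  EuclideanSpace.single 0 1 + px f p • EuclideanSpace.single 2 1
    + px g p • EuclideanSpace.single 3 1

/-- `∂_y = (0, 1, f_y, g_y)`. -/
def Dy (f g : ℝ × ℝ → ℝ) (p : ℝ × ℝ) : E4 :=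
  EuclideanSpace.single 1 1 + py f p • EuclideanSpace.single 2 1
    + py g p • EuclideanSpace.single 3 1

/-- The plane `Π = ℝ² × {0}` in `ℝ⁴`. -/
def Pl12 : Submodule ℝ E4 :=
  Submodule.span ℝ {EuclideanSpace.single 0 1, EuclideanSpace.single 1 1}

def mkX (a b : ℝ) : E4 :=
  EuclideanSpace.single 0 1 + a • EuclideanSpace.single 2 1 + b • EuclideanSpace.single 3 1
def mkY (c d : ℝ) : E4 :=
  EuclideanSpace.single 1 1 + c • EuclideanSpace.single 2 1 + d • EuclideanSpace.single 3 1

lemma inner_comb (a b c d s t u v : ℝ) :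
    ⟪s • mkX a b + t • mkY c d, u • mkX a b + v • mkY c d⟫ =
      s*u*(1+a^2+b^2) + (s*v+t*u)*(a*c+b*d) + t*v*(1+c^2+d^2) := by
  simp [PiLp.inner_apply, Fin.sum_univ_four, mkX, mkY, EuclideanSpace.single_apply]
  ring

lemma proj_Pl12 (v : E4) : (Pl12.orthogonalProjection v : E4)
    = v 0 • EuclideanSpace.single 0 1 + v 1 • EuclideanSpace.single 1 1 := by
  rw [← Submodule.starProjection_apply]
  apply Submodule.eq_starProjection_of_mem_of_inner_eq_zero
  · exact Submodule.add_mem _ (Submodule.smul_mem _ _ (Submodule.subset_span (by simp)))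
      (Submodule.smul_mem _ _ (Submodule.subset_span (by simp)))
  · intro w hw
    induction hw using Submodule.span_induction with
    | mem x hx =>
      rcases hx with h | h <;> subst h <;>
        simp [PiLp.inner_apply, EuclideanSpace.single_apply, Fin.sum_univ_four]
    | zero => simp
    | add x y _ _ hx hy => rw [inner_add_right, hx, hy]; ring
    | smul r x _ hx => rw [real_inner_smul_right, hx]; ring

lemma norm_proj_comb (a b c d s t : ℝ) :
    ‖(Pl12.orthogonalProjection (s • mkX a b + t • mkY c d) : E4)‖ ^ 2 = s^2 + t^2 := by
  rw [← real_inner_self_eq_norm_sq, proj_Pl12]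
  simp [PiLp.inner_apply, Fin.sum_univ_four, mkX, mkY, EuclideanSpace.single_apply]
  rw [EuclideanSpace.norm_sq_eq]
  simp [Fin.sum_univ_four, EuclideanSpace.single_apply]

lemma tan_sq_eq (θ : ℝ) (h : 0 < Real.cos θ) : Real.tan θ ^ 2 = 1 / Real.cos θ ^ 2 - 1 := by
  have hc : Real.cos θ ^ 2 ≠ 0 := by positivity
  rw [Real.tan_eq_sin_div_cos, div_pow, Real.sin_sq]
  field_simp

set_option maxHeartbeats 1600000 in
lemma key_fwd (a b c d θ₁ θ₂ : ℝ) (h0 : 0 < θ₁) (h12 : θ₁ ≤ θ₂) (h2 : θ₂ < π / 2)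
    (H : IsPrincipalAngles (Submodule.span ℝ {mkX a b, mkY c d}) Pl12 θ₁ θ₂) :
    a^2 + b^2 + c^2 + d^2 = (1/Real.cos θ₁)^2 + (1/Real.cos θ₂)^2 - 2 ∧
      (a*d - b*c)^2 = Real.tan θ₁ ^ 2 * Real.tan θ₂ ^ 2 := by
  obtain ⟨-, -, -, v₁, v₂, hv₁, hv₂, hn₁, hn₂, ho, hQ⟩ := H
  set X := mkX a b with hX
  set Y := mkY c d with hY
  have hc₁ : 0 < Real.cos θ₁ := Real.cos_pos_of_mem_Ioo
    ⟨by linarith [Real.pi_pos], by linarith⟩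
  have hc₂ : 0 < Real.cos θ₂ := Real.cos_pos_of_mem_Ioo
    ⟨by linarith [Real.pi_pos], by linarith⟩
  set c₁ := Real.cos θ₁ ^ 2 with hcc₁
  set c₂ := Real.cos θ₂ ^ 2 with hcc₂
  have hc₁' : 0 < c₁ := by positivity
  have hc₂' : 0 < c₂ := by positivity
  have i11 : ⟪v₁, v₁⟫ = 1 := by rw [real_inner_self_eq_norm_sq, hn₁]; norm_num
  have i22 : ⟪v₂, v₂⟫ = 1 := by rw [real_inner_self_eq_norm_sq, hn₂]; norm_num
  have i21 : ⟪v₂, v₁⟫ = 0 := by rw [real_inner_comm]; exact ho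
  have horth : Orthonormal ℝ ![v₁, v₂] := by
    rw [orthonormal_iff_ite]
    intro i j
    fin_cases i <;> fin_cases j <;> simp_all [real_inner_self_eq_norm_sq]
  have hli := horth.linearIndependent
  have hrange : Set.range ![v₁, v₂] = {v₁, v₂} := by
    simp [Matrix.range_cons, Matrix.range_empty, Set.pair_comm]
  have hfr2 : Module.finrank ℝ (Submodule.span ℝ ({v₁, v₂} : Set E4)) = 2 := by
    rw [← hrange, finrank_span_eq_card hli]; simp
  have hfrXY : Module.finrank ℝ (Submodule.span ℝ ({X, Y} : Set E4)) ≤ 2 := by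
    classical
    have h := finrank_span_le_card (R := ℝ) ({X, Y} : Set E4)
    have : ({X, Y} : Set E4).toFinset.card ≤ 2 := by
      rw [Set.toFinset_insert, Set.toFinset_singleton]
      exact (Finset.card_insert_le _ _).trans (by simp)
    omega
  have hspan : Submodule.span ℝ ({v₁, v₂} : Set E4) = Submodule.span ℝ ({X, Y} : Set E4) := by
    apply Submodule.eq_of_le_of_finrank_le
    · rw [Submodule.span_le]
      rintro x (rfl | rfl)
      exacts [hv₁, hv₂]
    · rw [hfr2]; exact hfrXY
  have hXm : X ∈ Submodule.span ℝ ({v₁, v₂} : Set E4) := by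
    rw [hspan]; exact Submodule.subset_span (by simp)
  have hYm : Y ∈ Submodule.span ℝ ({v₁, v₂} : Set E4) := by
    rw [hspan]; exact Submodule.subset_span (by simp)
  obtain ⟨p₁, q₁, hXe⟩ := Submodule.mem_span_pair.mp hXm
  obtain ⟨p₂, q₂, hYe⟩ := Submodule.mem_span_pair.mp hYm
  have expand : ∀ s t u v : ℝ, ⟪s • v₁ + t • v₂, u • v₁ + v • v₂⟫ = s*u + t*v := by
    intro s t u v
    rw [inner_add_left, inner_add_right, inner_add_right, real_inner_smul_left,
      real_inner_smul_left, real_inner_smul_left, real_inner_smul_left,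
      real_inner_smul_right, real_inner_smul_right, real_inner_smul_right,
      real_inner_smul_right, i11, i22, ho, i21]
    ring
  have hXc : X = (1:ℝ) • mkX a b + (0:ℝ) • mkY c d := by rw [← hX, ← hY]; simp
  have hYc : Y = (0:ℝ) • mkX a b + (1:ℝ) • mkY c d := by rw [← hX, ← hY]; simp
  have E1 : p₁^2 + q₁^2 = 1 + a^2 + b^2 := by
    have h := inner_comb a b c d 1 0 1 0
    rw [← hXc, ← hXe, expand] at h; linarith [h]
  have E2 : p₁*p₂ + q₁*q₂ = a*c + b*d := by
    have h := inner_comb a b c d 1 0 0 1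
    rw [← hXc, ← hYc, ← hXe, ← hYe, expand] at h; linarith [h]
  have E3 : p₂^2 + q₂^2 = 1 + c^2 + d^2 := by
    have h := inner_comb a b c d 0 1 0 1
    rw [← hYc, ← hYe, expand] at h; linarith [h]
  have iX1 : ⟪X, v₁⟫ = p₁ := by
    rw [← hXe, inner_add_left, real_inner_smul_left, real_inner_smul_left, i11, i21]; ring
  have iX2 : ⟪X, v₂⟫ = q₁ := by
    rw [← hXe, inner_add_left, real_inner_smul_left, real_inner_smul_left, i22, ho]; ring
  have iY1 : ⟪Y, v₁⟫ = p₂ := by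
    rw [← hYe, inner_add_left, real_inner_smul_left, real_inner_smul_left, i11, i21]; ring
  have iY2 : ⟪Y, v₂⟫ = q₂ := by
    rw [← hYe, inner_add_left, real_inner_smul_left, real_inner_smul_left, i22, ho]; ring
  have hXV : X ∈ Submodule.span ℝ ({X, Y} : Set E4) := Submodule.subset_span (by simp)
  have hYV : Y ∈ Submodule.span ℝ ({X, Y} : Set E4) := Submodule.subset_span (by simp)
  have e4 : c₁ * p₁^2 + c₂ * q₁^2 = 1 := by
    have h := hQ X hXV
    rw [iX1, iX2] at h
    have hL : ‖(Pl12.orthogonalProjection X : E4)‖ ^ 2 = 1 := by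
      have h' := norm_proj_comb a b c d 1 0
      rw [← hXc] at h'; rw [h']; norm_num
    rw [hL] at h; linarith [h]
  have e5 : c₁ * p₂^2 + c₂ * q₂^2 = 1 := by
    have h := hQ Y hYV
    rw [iY1, iY2] at h
    have hL : ‖(Pl12.orthogonalProjection Y : E4)‖ ^ 2 = 1 := by
      have h' := norm_proj_comb a b c d 0 1
      rw [← hYc] at h'; rw [h']; norm_num
    rw [hL] at h; linarith [h]
  have e6 : c₁ * (p₁ * p₂) + c₂ * (q₁ * q₂) = 0 := by
    have h := hQ (X + Y) (Submodule.add_mem _ hXV hYV)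
    rw [inner_add_left, inner_add_left, iX1, iX2, iY1, iY2] at h
    have hL : ‖(Pl12.orthogonalProjection (X + Y) : E4)‖ ^ 2 = 2 := by
      have h' := norm_proj_comb a b c d 1 1
      rw [show (1:ℝ) • mkX a b + (1:ℝ) • mkY c d = X + Y by rw [← hX, ← hY]; simp] at h'
      rw [h']; norm_num
    rw [hL] at h
    linear_combination (-1/2 : ℝ) * h - (1/2 : ℝ) * e4 - (1/2 : ℝ) * e5
  have hA : c₂ * (q₁^2 + q₂^2) = 1 := by
    linear_combination (c₁*p₂^2) * e4 + (1 - c₂*q₁^2) * e5 - (c₁*p₁*p₂ - c₂*q₁*q₂) * e6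
  have hB : c₁ * (p₁^2 + p₂^2) = 1 := by
    linear_combination (c₂*q₂^2) * e4 + (1 - c₁*p₁^2) * e5 - (c₂*q₁*q₂ - c₁*p₁*p₂) * e6
  have hdet : c₁ * c₂ * (p₁*q₂ - p₂*q₁)^2 = 1 := by
    linear_combination (c₁*p₂^2 + c₂*q₂^2) * e4 + e5 - (c₁*p₁*p₂ + c₂*q₁*q₂) * e6
  have hq : q₁^2 + q₂^2 = 1/c₂ := by rw [eq_div_iff hc₂'.ne']; linarith [hA]
  have hp : p₁^2 + p₂^2 = 1/c₁ := by rw [eq_div_iff hc₁'.ne']; linarith [hB]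
  have hS : a^2 + b^2 + c^2 + d^2 = 1/c₁ + 1/c₂ - 2 := by linarith [E1, E3, hp, hq]
  have hrw₁ : (1/Real.cos θ₁)^2 = 1/c₁ := by rw [hcc₁]; ring
  have hrw₂ : (1/Real.cos θ₂)^2 = 1/c₂ := by rw [hcc₂]; ring
  constructor
  · rw [hrw₁, hrw₂]; exact hS
  · rw [tan_sq_eq θ₁ hc₁, tan_sq_eq θ₂ hc₂, ← hcc₁, ← hcc₂]
    have h3 : (p₁*q₂ - p₂*q₁)^2 = 1/(c₁*c₂) := by
      rw [eq_div_iff (mul_pos hc₁' hc₂').ne']; linarith [hdet]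
    have key2 : (a*d-b*c)^2 = (p₁*q₂-p₂*q₁)^2 - 1 - (a^2+b^2+c^2+d^2) := by
      linear_combination -(p₂^2+q₂^2)*E1 - (1+a^2+b^2)*E3 + (p₁*p₂+q₁*q₂+a*c+b*d)*E2
    rw [h3] at key2
    have hm : (1/c₁ - 1)*(1/c₂ - 1) = 1/(c₁*c₂) - 1/c₁ - 1/c₂ + 1 := by
      field_simp
      ring
    linarith [key2, hS, hm]

lemma norm_unit (w : E4) (n : ℝ) (hn : 0 < n) (h : ⟪w, w⟫ = n) :
    ‖(1 / Real.sqrt n) • w‖ = 1 := by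
  have hw : ‖w‖ = Real.sqrt n := by
    rw [← h, real_inner_self_eq_norm_sq, Real.sqrt_sq (norm_nonneg w)]
  have hs : (0:ℝ) < Real.sqrt n := Real.sqrt_pos.mpr hn
  rw [norm_smul, Real.norm_eq_abs, abs_of_pos (by positivity), hw]
  field_simp

set_option maxHeartbeats 1600000 in
lemma build (a b c d θ₁ θ₂ α₁ β₁ α₂ β₂ n₁ n₂ : ℝ)
    (hθ0 : 0 ≤ θ₁) (hθ12 : θ₁ ≤ θ₂) (hθ2 : θ₂ ≤ π / 2)
    (hn₁ : 0 < n₁) (hn₂ : 0 < n₂)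
    (h11 : α₁*α₁*(1+a^2+b^2) + (α₁*β₁+β₁*α₁)*(a*c+b*d) + β₁*β₁*(1+c^2+d^2) = n₁)
    (h22 : α₂*α₂*(1+a^2+b^2) + (α₂*β₂+β₂*α₂)*(a*c+b*d) + β₂*β₂*(1+c^2+d^2) = n₂)
    (h12 : α₁*α₂*(1+a^2+b^2) + (α₁*β₂+β₁*α₂)*(a*c+b*d) + β₁*β₂*(1+c^2+d^2) = 0)
    (hQs : ∀ s t : ℝ, s^2+t^2 =
      Real.cos θ₁^2/n₁ * (s*α₁*(1+a^2+b^2)+(s*β₁+t*α₁)*(a*c+b*d)+t*β₁*(1+c^2+d^2))^2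
      + Real.cos θ₂^2/n₂ * (s*α₂*(1+a^2+b^2)+(s*β₂+t*α₂)*(a*c+b*d)+t*β₂*(1+c^2+d^2))^2) :
    IsPrincipalAngles (Submodule.span ℝ {mkX a b, mkY c d}) Pl12 θ₁ θ₂ := by
  have hXV : mkX a b ∈ Submodule.span ℝ ({mkX a b, mkY c d} : Set E4) :=
    Submodule.subset_span (by simp)
  have hYV : mkY c d ∈ Submodule.span ℝ ({mkX a b, mkY c d} : Set E4) :=
    Submodule.subset_span (by simp)
  have hw₁ : ⟪α₁ • mkX a b + β₁ • mkY c d, α₁ • mkX a b + β₁ • mkY c d⟫ = n₁ := by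
    rw [inner_comb]; exact h11
  have hw₂ : ⟪α₂ • mkX a b + β₂ • mkY c d, α₂ • mkX a b + β₂ • mkY c d⟫ = n₂ := by
    rw [inner_comb]; exact h22
  refine ⟨hθ0, hθ12, hθ2,
    (1 / Real.sqrt n₁) • (α₁ • mkX a b + β₁ • mkY c d),
    (1 / Real.sqrt n₂) • (α₂ • mkX a b + β₂ • mkY c d),
    Submodule.smul_mem _ _ (Submodule.add_mem _ (Submodule.smul_mem _ _ hXV)
      (Submodule.smul_mem _ _ hYV)),
    Submodule.smul_mem _ _ (Submodule.add_mem _ (Submodule.smul_mem _ _ hXV)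
      (Submodule.smul_mem _ _ hYV)),
    norm_unit _ _ hn₁ hw₁, norm_unit _ _ hn₂ hw₂, ?_, ?_⟩
  · rw [real_inner_smul_left, real_inner_smul_right, inner_comb, h12]
    ring
  · intro v hv
    obtain ⟨s, t, hst⟩ := Submodule.mem_span_pair.mp hv
    subst hst
    rw [norm_proj_comb, real_inner_smul_right, real_inner_smul_right, inner_comb, inner_comb]
    have e₁ : ∀ K : ℝ, (1 / Real.sqrt n₁ * K)^2 = K^2/n₁ := by
      intro K
      rw [mul_pow, div_pow, one_pow, Real.sq_sqrt hn₁.le]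
      ring
    have e₂ : ∀ K : ℝ, (1 / Real.sqrt n₂ * K)^2 = K^2/n₂ := by
      intro K
      rw [mul_pow, div_pow, one_pow, Real.sq_sqrt hn₂.le]
      ring
    rw [e₁, e₂]
    have := hQs s t
    have hh₁ : Real.cos θ₁ ^ 2 *
        ((s*α₁*(1+a^2+b^2)+(s*β₁+t*α₁)*(a*c+b*d)+t*β₁*(1+c^2+d^2))^2 / n₁) =
        Real.cos θ₁^2/n₁ * (s*α₁*(1+a^2+b^2)+(s*β₁+t*α₁)*(a*c+b*d)+t*β₁*(1+c^2+d^2))^2 := by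
      ring
    linarith [this, hh₁, (by ring : Real.cos θ₂ ^ 2 *
        ((s*α₂*(1+a^2+b^2)+(s*β₂+t*α₂)*(a*c+b*d)+t*β₂*(1+c^2+d^2))^2 / n₂) =
        Real.cos θ₂^2/n₂ * (s*α₂*(1+a^2+b^2)+(s*β₂+t*α₂)*(a*c+b*d)+t*β₂*(1+c^2+d^2))^2)]

lemma key_rev (a b c d θ₁ θ₂ : ℝ) (h0 : 0 < θ₁) (h12 : θ₁ ≤ θ₂) (h2 : θ₂ < π / 2)
    (hp1 : a^2 + b^2 + c^2 + d^2 = (1/Real.cos θ₁)^2 + (1/Real.cos θ₂)^2 - 2)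
    (hp2 : (a*d - b*c)^2 = Real.tan θ₁ ^ 2 * Real.tan θ₂ ^ 2) :
    IsPrincipalAngles (Submodule.span ℝ {mkX a b, mkY c d}) Pl12 θ₁ θ₂ := by
  have hc₁ : 0 < Real.cos θ₁ := Real.cos_pos_of_mem_Ioo
    ⟨by linarith [Real.pi_pos], by linarith⟩
  have hc₂ : 0 < Real.cos θ₂ := Real.cos_pos_of_mem_Ioo
    ⟨by linarith [Real.pi_pos], by linarith⟩
  rw [tan_sq_eq θ₁ hc₁, tan_sq_eq θ₂ hc₂] at hp2
  set c₁ := Real.cos θ₁ ^ 2 with hcc₁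
  set c₂ := Real.cos θ₂ ^ 2 with hcc₂
  have hc₁' : 0 < c₁ := by positivity
  have hc₂' : 0 < c₂ := by positivity
  set s₁ := 1/c₁ with hs₁
  set s₂ := 1/c₂ with hs₂
  have hcs₁ : c₁ * s₁ = 1 := by rw [hs₁]; field_simp
  have hcs₂ : c₂ * s₂ = 1 := by rw [hs₂]; field_simp
  have hs₁pos : 0 < s₁ := by rw [hs₁]; positivity
  have hs₂pos : 0 < s₂ := by rw [hs₂]; positivity
  have hp1' : a^2 + b^2 + c^2 + d^2 = s₁ + s₂ - 2 := by
    rw [hp1, hs₁, hs₂, hcc₁, hcc₂]; ring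
  have hp2' : (a*d - b*c)^2 = (s₁ - 1) * (s₂ - 1) := by
    rw [hp2, hs₁, hs₂]
  have hEG : (1+a^2+b^2) + (1+c^2+d^2) = s₁ + s₂ := by linarith [hp1']
  have hDET : (1+a^2+b^2)*(1+c^2+d^2) - (a*c+b*d)^2 = s₁ * s₂ := by
    linear_combination hp1' + hp2'
  by_cases hF : a*c + b*d = 0
  · -- diagonal case
    have hquad : ((1+a^2+b^2) - s₁) * ((1+a^2+b^2) - s₂) = 0 := by
      linear_combination -hDET + (1+a^2+b^2)*hEG - (a*c+b*d)*hF
    rcases mul_eq_zero.mp hquad with h | h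
    · have hE : 1+a^2+b^2 = s₁ := by linarith [h]
      have hG : 1+c^2+d^2 = s₂ := by linarith [hEG]
      have hc₁E : c₁ * (1+a^2+b^2) = 1 := by rw [hE]; exact hcs₁
      have hc₂G : c₂ * (1+c^2+d^2) = 1 := by rw [hG]; exact hcs₂
      refine build a b c d θ₁ θ₂ 1 0 0 1 (1+a^2+b^2) (1+c^2+d^2)
        h0.le h12 h2.le (by positivity) (by positivity) (by ring) (by ring)
        (by linear_combination hF) ?_
      intro s t
      have r1 : s*1*(1+a^2+b^2)+(s*0+t*1)*(a*c+b*d)+t*0*(1+c^2+d^2) = s*(1+a^2+b^2) := by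
        rw [hF]; ring
      have r2 : s*0*(1+a^2+b^2)+(s*1+t*0)*(a*c+b*d)+t*1*(1+c^2+d^2) = t*(1+c^2+d^2) := by
        rw [hF]; ring
      rw [r1, r2, ← hcc₁, ← hcc₂]
      have q1 : c₁/(1+a^2+b^2)*(s*(1+a^2+b^2))^2 = s^2*(c₁*(1+a^2+b^2)) := by
        field_simp
      have q2 : c₂/(1+c^2+d^2)*(t*(1+c^2+d^2))^2 = t^2*(c₂*(1+c^2+d^2)) := by
        field_simp
      rw [q1, q2, hc₁E, hc₂G]; ring
    · have hE : 1+a^2+b^2 = s₂ := by linarith [h]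
      have hG : 1+c^2+d^2 = s₁ := by linarith [hEG]
      have hc₁G : c₁ * (1+c^2+d^2) = 1 := by rw [hG]; exact hcs₁
      have hc₂E : c₂ * (1+a^2+b^2) = 1 := by rw [hE]; exact hcs₂
      refine build a b c d θ₁ θ₂ 0 1 1 0 (1+c^2+d^2) (1+a^2+b^2)
        h0.le h12 h2.le (by positivity) (by positivity) (by ring) (by ring)
        (by linear_combination hF) ?_
      intro s t
      have r1 : s*0*(1+a^2+b^2)+(s*1+t*0)*(a*c+b*d)+t*1*(1+c^2+d^2) = t*(1+c^2+d^2) := by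
        rw [hF]; ring
      have r2 : s*1*(1+a^2+b^2)+(s*0+t*1)*(a*c+b*d)+t*0*(1+c^2+d^2) = s*(1+a^2+b^2) := by
        rw [hF]; ring
      rw [r1, r2, ← hcc₁, ← hcc₂]
      have q1 : c₁/(1+c^2+d^2)*(t*(1+c^2+d^2))^2 = t^2*(c₁*(1+c^2+d^2)) := by
        field_simp
      have q2 : c₂/(1+a^2+b^2)*(s*(1+a^2+b^2))^2 = s^2*(c₂*(1+a^2+b^2)) := by
        field_simp
      rw [q1, q2, hc₁G, hc₂E]; ring
  · -- off-diagonal case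
    have hF2 : 0 < (a*c+b*d)^2 := by positivity
    have hl₁ : 0 < (a*c+b*d)^2 + (s₁ - (1+a^2+b^2))^2 := by positivity
    have hl₂ : 0 < (a*c+b*d)^2 + (s₂ - (1+a^2+b^2))^2 := by positivity
    have hprod : (s₁ - (1+a^2+b^2)) * (s₂ - (1+a^2+b^2)) = -(a*c+b*d)^2 := by
      linear_combination (1+a^2+b^2)*hEG - hDET
    refine build a b c d θ₁ θ₂ (a*c+b*d) (s₁ - (1+a^2+b^2)) (a*c+b*d) (s₂ - (1+a^2+b^2))
      (s₁ * ((a*c+b*d)^2 + (s₁ - (1+a^2+b^2))^2))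
      (s₂ * ((a*c+b*d)^2 + (s₂ - (1+a^2+b^2))^2))
      h0.le h12 h2.le (by positivity) (by positivity)
      (by linear_combination ((s₁-(1+a^2+b^2))*s₁)*hEG - (s₁-(1+a^2+b^2))*hDET)
      (by linear_combination ((s₂-(1+a^2+b^2))*s₂)*hEG - (s₂-(1+a^2+b^2))*hDET)
      (by linear_combination ((1+c^2+d^2)*(1+a^2+b^2) - (a*c+b*d)^2)*hEG - (1+c^2+d^2)*hDET) ?_
    intro s t
    have hI₁ : s*(a*c+b*d)*(1+a^2+b^2)+(s*(s₁-(1+a^2+b^2))+t*(a*c+b*d))*(a*c+b*d)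
        + t*(s₁-(1+a^2+b^2))*(1+c^2+d^2)
        = s₁*(s*(a*c+b*d)+t*(s₁-(1+a^2+b^2))) := by
      linear_combination (t*s₁)*hEG - t*hDET
    have hI₂ : s*(a*c+b*d)*(1+a^2+b^2)+(s*(s₂-(1+a^2+b^2))+t*(a*c+b*d))*(a*c+b*d)
        + t*(s₂-(1+a^2+b^2))*(1+c^2+d^2)
        = s₂*(s*(a*c+b*d)+t*(s₂-(1+a^2+b^2))) := by
      linear_combination (t*s₂)*hEG - t*hDET
    rw [hI₁, hI₂, ← hcc₁, ← hcc₂]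
    have q1 : c₁/(s₁ * ((a*c+b*d)^2 + (s₁ - (1+a^2+b^2))^2))
        * (s₁*(s*(a*c+b*d)+t*(s₁-(1+a^2+b^2))))^2
        = (c₁*s₁) * ((s*(a*c+b*d)+t*(s₁-(1+a^2+b^2)))^2
            / ((a*c+b*d)^2 + (s₁ - (1+a^2+b^2))^2)) := by
      field_simp
    have q2 : c₂/(s₂ * ((a*c+b*d)^2 + (s₂ - (1+a^2+b^2))^2))
        * (s₂*(s*(a*c+b*d)+t*(s₂-(1+a^2+b^2))))^2
        = (c₂*s₂) * ((s*(a*c+b*d)+t*(s₂-(1+a^2+b^2)))^2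
            / ((a*c+b*d)^2 + (s₂ - (1+a^2+b^2))^2)) := by
      field_simp
    rw [q1, q2, hcs₁, hcs₂, one_mul, one_mul,
      div_add_div _ _ hl₁.ne' hl₂.ne', eq_div_iff (mul_ne_zero hl₁.ne' hl₂.ne')]
    linear_combination ((s^2-t^2)*((s₁-(1+a^2+b^2))*(s₂-(1+a^2+b^2))-(a*c+b*d)^2)
      - 2*s*t*(a*c+b*d)*((s₁-(1+a^2+b^2))+(s₂-(1+a^2+b^2)))) * hprod


/-- The graph `(x,y) ↦ (x,y,f(x,y),g(x,y))` has constant principal angles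
`θ₁, θ₂ ∈ (0, π/2)` with respect to `ℝ²×{0}` iff
`f_x² + g_x² + f_y² + g_y² = sec²θ₁ + sec²θ₂ − 2` and
`(f_x g_y − f_y g_x)² = tan²θ₁ tan²θ₂` hold identically. -/
theorem graph_constant_principal_angles_iff_pde
    (f g : ℝ × ℝ → ℝ) (Ω : Set (ℝ × ℝ)) (hΩ : IsOpen Ω)
    (hf : ContDiffOn ℝ (⊤ : ℕ∞) f Ω) (hg : ContDiffOn ℝ (⊤ : ℕ∞) g Ω)
    (θ₁ θ₂ : ℝ) (h0 : 0 < θ₁) (h12 : θ₁ ≤ θ₂) (h2 : θ₂ < π / 2) :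
    (∀ p ∈ Ω, IsPrincipalAngles (Submodule.span ℝ {Dx f g p, Dy f g p}) Pl12 θ₁ θ₂) ↔
    (∀ p ∈ Ω,
      px f p ^ 2 + px g p ^ 2 + py f p ^ 2 + py g p ^ 2 =
        (1 / Real.cos θ₁) ^ 2 + (1 / Real.cos θ₂) ^ 2 - 2 ∧
      (px f p * py g p - py f p * px g p) ^ 2 = Real.tan θ₁ ^ 2 * Real.tan θ₂ ^ 2) := by
  have eX : ∀ p, Dx f g p = mkX (px f p) (px g p) := fun p => rfl
  have eY : ∀ p, Dy f g p = mkY (py f p) (py g p) := fun p => rfl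
  constructor
  · intro h p hp
    have H := key_fwd (px f p) (px g p) (py f p) (py g p) θ₁ θ₂ h0 h12 h2
      (by rw [← eX, ← eY]; exact h p hp)
    exact ⟨H.1, by linear_combination H.2⟩
  · intro h p hp
    rw [eX, eY]
    exact key_rev (px f p) (px g p) (py f p) (py g p) θ₁ θ₂ h0 h12 h2 (h p hp).1
      (by linear_combination (h p hp).2)
end
end
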